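/- arXiv:math/0406456 — 5 statements merged into one kernel-verified Lean document; each statement's English description precedes it below -/
import Mathlib

section
/- Let $X_{\mathcal{A}}$ and $X_{\mathcal{B}}$ be matrices with linearly independent columns such that the columns of $X_{\mathcal{A}}$ form a subset of the columns of $X_{\mathcal{B}}$. Then $A_{\mathcal{A}} \geq A_{\mathcal{B}}$, where $A_{\mathcal{C}} = (\mathbf{1}'(X_{\mathcal{C}}'X_{\mathcal{C}})^{-1}\mathbf{1})^{-1/2}$. Moreover, if $X_{\mathcal{A}}$ has a single unit-length column, then $A_{\mathcal{A}} = 1$. -/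
/-!
For a positive definite `G`, the quadratic form of `G⁻¹` is a maximum:
`v ⬝ᵥ G⁻¹ v = max_x (2 v ⬝ᵥ x - x ⬝ᵥ G x)`, attained at `x = G⁻¹ v`.
The Gram matrix of a subset of the columns is a principal submatrix of the full Gram matrix,
and vectors `x` supported on those columns form a subset of the competitors, so
`1 ⬝ᵥ G_A⁻¹ 1 ≤ 1 ⬝ᵥ G_B⁻¹ 1`. A single unit column has Gram matrix `1`.
-/

open Matrix

section

variable {ι κ : Type*} [Fintype ι] [Fintype κ]

theorem dotProduct_extend_zero {f : κ → ι} (hf : f.Injective) (a : ι → ℝ) (w : κ → ℝ) :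
    a ⬝ᵥ Function.extend f w 0 = (a ∘ f) ⬝ᵥ w := by
  refine (Fintype.sum_of_injective f hf _ _ (fun j hj => ?_) fun i => ?_).symm
  · simp [Function.extend_apply' _ _ _ (by simpa using hj)]
  · simp [hf.extend_apply]

theorem extend_zero_dotProduct_mulVec {f : κ → ι} (hf : f.Injective) (G : Matrix ι ι ℝ)
    (w : κ → ℝ) :
    Function.extend f w 0 ⬝ᵥ (G *ᵥ Function.extend f w 0) = w ⬝ᵥ (G.submatrix f f *ᵥ w) := by
  rw [dotProduct_comm, dotProduct_extend_zero hf, dotProduct_comm]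
  congr 1
  ext i
  simp [mulVec, dotProduct_extend_zero hf, Function.comp_def]

theorem two_mul_dotProduct_sub_le_dotProduct_inv_mulVec [DecidableEq ι] {G : Matrix ι ι ℝ}
    (hG : G.PosDef) (v x : ι → ℝ) :
    2 * (v ⬝ᵥ x) - x ⬝ᵥ (G *ᵥ x) ≤ v ⬝ᵥ (G⁻¹ *ᵥ v) := by
  set u := G⁻¹ *ᵥ v
  have hGu : G *ᵥ u = v := by
    rw [mulVec_mulVec, mul_nonsing_inv _ ((isUnit_iff_isUnit_det G).mp hG.isUnit), one_mulVec]
  have hsymm : u ⬝ᵥ (G *ᵥ x) = v ⬝ᵥ x := by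
    have hT : Gᵀ = G := by rw [← conjTranspose_eq_transpose_of_trivial]; exact hG.isHermitian
    rw [dotProduct_mulVec, ← mulVec_transpose, hT, hGu]
  have h := hG.posSemidef.dotProduct_mulVec_nonneg (u - x)
  rw [star_trivial] at h
  simp only [mulVec_sub, dotProduct_sub, sub_dotProduct, hsymm, hGu] at h
  linarith [dotProduct_comm v x, dotProduct_comm v u]

theorem dotProduct_submatrix_inv_mulVec_le [DecidableEq ι] [DecidableEq κ] {G : Matrix ι ι ℝ}
    (hG : G.PosDef) {f : κ → ι} (hf : f.Injective) (v : ι → ℝ) :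
    (v ∘ f) ⬝ᵥ ((G.submatrix f f)⁻¹ *ᵥ (v ∘ f)) ≤ v ⬝ᵥ (G⁻¹ *ᵥ v) := by
  set H := G.submatrix f f
  set w := H⁻¹ *ᵥ (v ∘ f)
  have hHw : H *ᵥ w = v ∘ f := by
    rw [mulVec_mulVec, mul_nonsing_inv _ ((isUnit_iff_isUnit_det H).mp (hG.submatrix hf).isUnit),
      one_mulVec]
  have h := two_mul_dotProduct_sub_le_dotProduct_inv_mulVec hG v (Function.extend f w 0)
  rw [dotProduct_extend_zero hf, extend_zero_dotProduct_mulVec hf, hHw] at h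
  linarith [dotProduct_comm w (v ∘ f)]

end

theorem stmt2_general (n k l : ℕ) (hk : 0 < k)
    (XA : Matrix (Fin n) (Fin k) ℝ) (XB : Matrix (Fin n) (Fin l) ℝ)
    (f : Fin k → Fin l) (hf : Function.Injective f)
    (hcols : ∀ i j, XA i j = XB i (f j))
    (hliB : LinearIndependent ℝ XB.transpose) :
    let AA : ℝ :=
      (Real.sqrt ((1 : Fin k → ℝ) ⬝ᵥ ((XA.transpose * XA)⁻¹ *ᵥ (1 : Fin k → ℝ))))⁻¹
    let AB : ℝ :=
      (Real.sqrt ((1 : Fin l → ℝ) ⬝ᵥ ((XB.transpose * XB)⁻¹ *ᵥ (1 : Fin l → ℝ))))⁻¹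
    AB ≤ AA ∧
      (k = 1 → (∀ j, (fun i => XA i j) ⬝ᵥ (fun i => XA i j) = 1) → AA = 1) := by
  intro AA AB
  have : NeZero k := ⟨hk.ne'⟩
  have hGB : (XBᵀ * XB).PosDef := by
    simpa using PosDef.conjTranspose_mul_self XB (mulVec_injective_iff.mpr hliB)
  have hGA : XAᵀ * XA = (XBᵀ * XB).submatrix f f := by
    ext i j
    simp [mul_apply, hcols]
  have hqA : 0 < (1 : Fin k → ℝ) ⬝ᵥ ((XAᵀ * XA)⁻¹ *ᵥ 1) := by
    simpa [hGA] using (hGB.submatrix hf).inv.dotProduct_mulVec_pos one_ne_zero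
  refine ⟨inv_anti₀ (Real.sqrt_pos.mpr hqA) (Real.sqrt_le_sqrt ?_), ?_⟩
  · simpa [hGA] using dotProduct_submatrix_inv_mulVec_le hGB hf 1
  · rintro rfl hunit
    have hGA1 : XAᵀ * XA = 1 := by
      ext i j
      obtain rfl : i = 0 := Subsingleton.elim i 0
      obtain rfl : j = 0 := Subsingleton.elim j 0
      simpa [mul_apply, dotProduct] using hunit 0
    simp [AA, hGA1]

theorem stmt2 (n k l : ℕ) (hk : 0 < k)
    (XA : Matrix (Fin n) (Fin k) ℝ) (XB : Matrix (Fin n) (Fin l) ℝ)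
    (f : Fin k → Fin l) (hf : Function.Injective f)
    (hcols : ∀ i j, XA i j = XB i (f j))
    (hliA : LinearIndependent ℝ XA.transpose)
    (hliB : LinearIndependent ℝ XB.transpose) :
    let AA : ℝ :=
      (Real.sqrt ((1 : Fin k → ℝ) ⬝ᵥ ((XA.transpose * XA)⁻¹ *ᵥ (1 : Fin k → ℝ))))⁻¹
    let AB : ℝ :=
      (Real.sqrt ((1 : Fin l → ℝ) ⬝ᵥ ((XB.transpose * XB)⁻¹ *ᵥ (1 : Fin l → ℝ))))⁻¹
    AB ≤ AA ∧
      (k = 1 → (∀ j, (fun i => XA i j) ⬝ᵥ (fun i => XA i j) = 1) → AA = 1) :=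
  stmt2_general n k l hk XA XB f hf hcols hliB
end

section
/- Under the hypotheses of the previous setup, if additionally $G_{\mathcal{A}+}^{-1}\mathbf{1} > 0$ componentwise (the positive cone condition for the enlarged set), then $x_+'u_{\mathcal{A}} < A_{\mathcal{A}}$; that is, the new variable makes a strictly smaller inner product with the old equiangular vector than the common value $A_{\mathcal{A}}$. -/
/-!
Let `r = (I - P)x₊` be the residual of `x₊` after projecting onto the column span of `X_A`.
Solving `G₊ v = 1` blockwise gives `v₊ ‖r‖² = 1 - x₊'X_A G⁻¹1 = 1 - x₊'u_A / A_A`. As `x₊` lies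
outside the span, `‖r‖² > 0`, so the cone condition `v₊ > 0` forces `x₊'u_A < A_A`
(note `A_A > 0` because `G⁻¹` is positive definite).
-/

open Matrix

namespace Matrix

variable {R : Type*} {m ι : Type*}

def appendCol (X : Matrix m ι R) (x : m → R) : Matrix m (ι ⊕ Unit) R :=
  fromCols X (replicateCol Unit x)

section CommRing

variable [CommRing R] (X : Matrix m ι R) (x : m → R)

lemma appendCol_mulVec [Fintype ι] (v : ι ⊕ Unit → R) :
    appendCol X x *ᵥ v = X *ᵥ (v ∘ Sum.inl) + v (Sum.inr ()) • x := by
  ext i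
  simp [appendCol, mulVec, dotProduct, mul_comm]

lemma transpose_appendCol_mulVec [Fintype m] (w : m → R) :
    (appendCol X x)ᵀ *ᵥ w = Sum.elim (Xᵀ *ᵥ w) (fun _ => x ⬝ᵥ w) := by
  ext (l | _)
  · rfl
  · simp [appendCol, mulVec, dotProduct]

variable [Fintype m] [Fintype ι] [DecidableEq ι]

/-- `(I - P) x` for the projection `P = X (XᵀX)⁻¹ Xᵀ` onto the column span of `X`. -/
noncomputable def projResidual : m → R := x - X *ᵥ ((Xᵀ * X)⁻¹ *ᵥ (Xᵀ *ᵥ x))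

variable {X}

lemma transpose_mulVec_projResidual (hX : IsUnit (Xᵀ * X)) : Xᵀ *ᵥ projResidual X x = 0 := by
  rw [projResidual, mulVec_sub, mulVec_mulVec, mulVec_mulVec,
    mul_nonsing_inv _ ((isUnit_iff_isUnit_det _).mp hX), one_mulVec, sub_self]

lemma projResidual_dotProduct_mulVec (hX : IsUnit (Xᵀ * X)) (c : ι → R) :
    projResidual X x ⬝ᵥ (X *ᵥ c) = 0 := by
  rw [dotProduct_mulVec, ← mulVec_transpose, transpose_mulVec_projResidual x hX, zero_dotProduct]

lemma projResidual_ne_zero (hx : x ∉ Submodule.span R (Set.range Xᵀ)) : projResidual X x ≠ 0 := by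
  intro h
  refine hx ?_
  change x ∈ Submodule.span R (Set.range X.col)
  rw [← range_mulVecLin, sub_eq_zero.mp h]
  exact LinearMap.mem_range_self _ _

/-- The last coordinate of `(YᵀY)⁻¹ a` for `Y = [X x]`; for `a = 1` and `‖x‖ = 1` this is the
rank-one update formula `(G₊⁻¹1)₊ = (1 - x'Px)⁻¹ (1 - x'u / A)`. -/
lemma inv_gram_appendCol_mulVec_inr_mul (hX : IsUnit (Xᵀ * X))
    (hY : IsUnit ((appendCol X x)ᵀ * appendCol X x)) (a : ι ⊕ Unit → R) :
    (((appendCol X x)ᵀ * appendCol X x)⁻¹ *ᵥ a) (Sum.inr ()) *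
        (projResidual X x ⬝ᵥ projResidual X x) =
      a (Sum.inr ()) - x ⬝ᵥ (X *ᵥ ((Xᵀ * X)⁻¹ *ᵥ (a ∘ Sum.inl))) := by
  set v := ((appendCol X x)ᵀ * appendCol X x)⁻¹ *ᵥ a
  set w := appendCol X x *ᵥ v
  set c := (Xᵀ * X)⁻¹ *ᵥ (Xᵀ *ᵥ x)
  set r := projResidual X x
  have hw : (appendCol X x)ᵀ *ᵥ w = a := by
    rw [mulVec_mulVec, mulVec_mulVec, mul_nonsing_inv _ ((isUnit_iff_isUnit_det _).mp hY),
      one_mulVec]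
  have hwv : w = X *ᵥ (v ∘ Sum.inl) + v (Sum.inr ()) • x := appendCol_mulVec X x v
  clear_value w
  rw [transpose_appendCol_mulVec] at hw
  have hXw : Xᵀ *ᵥ w = a ∘ Sum.inl := by rw [← hw]; rfl
  have hxw : x ⬝ᵥ w = a (Sum.inr ()) := by rw [← hw]; rfl
  have hrr : r ⬝ᵥ r = r ⬝ᵥ x := by
    change r ⬝ᵥ (x - X *ᵥ c) = r ⬝ᵥ x
    rw [dotProduct_sub, projResidual_dotProduct_mulVec x hX, sub_zero]
  have hsymm : ((Xᵀ * X)⁻¹)ᵀ = (Xᵀ * X)⁻¹ := by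
    rw [transpose_nonsing_inv, transpose_mul, transpose_transpose]
  -- both sides equal `r ⬝ᵥ w`, as `r ⟂ range X` and `Yᵀ w = a`
  calc v (Sum.inr ()) * (r ⬝ᵥ r) = r ⬝ᵥ w := by
        rw [hwv, dotProduct_add, dotProduct_smul, projResidual_dotProduct_mulVec x hX,
          hrr, zero_add, smul_eq_mul]
    _ = x ⬝ᵥ w - c ⬝ᵥ (Xᵀ *ᵥ w) := by
        rw [show r = x - X *ᵥ c from rfl, sub_dotProduct, dotProduct_comm (X *ᵥ c),
          ← dotProduct_transpose_mulVec]
    _ = a (Sum.inr ()) - x ⬝ᵥ (X *ᵥ ((Xᵀ * X)⁻¹ *ᵥ (a ∘ Sum.inl))) := by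
        rw [hxw, hXw, dotProduct_mulVec x, ← mulVec_transpose, dotProduct_mulVec,
          ← mulVec_transpose, hsymm]

end CommRing

lemma linearIndependent_transpose_appendCol [Field R] {X : Matrix m ι R} {x : m → R}
    (hX : LinearIndependent R Xᵀ) (hx : x ∉ Submodule.span R (Set.range Xᵀ)) :
    LinearIndependent R (appendCol X x)ᵀ := by
  have hx0 : x ≠ 0 := fun h => hx (h ▸ Submodule.zero_mem _)
  refine linearIndependent_sum.mpr ⟨hX, linearIndependent_unique_iff.mpr hx0, ?_⟩
  change Disjoint _ (Submodule.span R (Set.range fun _ : Unit => x))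
  rw [Set.range_const, Submodule.disjoint_span_singleton' hx0]
  exact hx

lemma posDef_transpose_mul_self [Fintype m] [Fintype ι] {X : Matrix m ι ℝ}
    (hX : LinearIndependent ℝ Xᵀ) : (Xᵀ * X).PosDef := by
  simpa [conjTranspose_eq_transpose_of_trivial] using
    PosDef.conjTranspose_mul_self X (mulVec_injective_iff.mpr hX)

end Matrix

theorem stmt11_general (n k : ℕ) (hk : 0 < k)
    (XA : Matrix (Fin n) (Fin k) ℝ) (xp : Fin n → ℝ)
    (hli : LinearIndependent ℝ XA.transpose)
    (hspan : xp ∉ Submodule.span ℝ (Set.range XA.transpose)) :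
    let G : Matrix (Fin k) (Fin k) ℝ := XA.transpose * XA
    let A : ℝ := (Real.sqrt ((1 : Fin k → ℝ) ⬝ᵥ (G⁻¹ *ᵥ (1 : Fin k → ℝ))))⁻¹
    let u : Fin n → ℝ := A • (XA *ᵥ (G⁻¹ *ᵥ (1 : Fin k → ℝ)))
    let XAp : Matrix (Fin n) (Fin k ⊕ Unit) ℝ :=
      Matrix.of fun i j => Sum.elim (fun l => XA i l) (fun _ => xp i) j
    let Gp : Matrix (Fin k ⊕ Unit) (Fin k ⊕ Unit) ℝ := XAp.transpose * XAp
    (∀ j, 0 < (Gp⁻¹ *ᵥ (1 : Fin k ⊕ Unit → ℝ)) j) →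
      xp ⬝ᵥ u < A := by
  intro G A u XAp Gp hpos
  have hG : G.PosDef := posDef_transpose_mul_self hli
  have hGp : Gp.PosDef :=
    posDef_transpose_mul_self (linearIndependent_transpose_appendCol hli hspan)
  have hrank_one : (Gp⁻¹ *ᵥ 1) (Sum.inr ()) * (projResidual XA xp ⬝ᵥ projResidual XA xp) =
      1 - xp ⬝ᵥ (XA *ᵥ (G⁻¹ *ᵥ 1)) :=
    inv_gram_appendCol_mulVec_inr_mul xp hG.isUnit hGp.isUnit 1
  have hres : 0 < projResidual XA xp ⬝ᵥ projResidual XA xp := by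
    simpa using dotProduct_self_star_pos_iff.mpr (projResidual_ne_zero xp hspan)
  have ht : xp ⬝ᵥ (XA *ᵥ (G⁻¹ *ᵥ 1)) < 1 := by
    linarith [mul_pos (hpos (Sum.inr ())) hres]
  have hA : 0 < A := by
    have : Nonempty (Fin k) := ⟨⟨0, hk⟩⟩
    exact inv_pos.mpr (Real.sqrt_pos.mpr (by simpa using hG.inv.dotProduct_mulVec_pos one_ne_zero))
  calc xp ⬝ᵥ u = A * xp ⬝ᵥ (XA *ᵥ (G⁻¹ *ᵥ 1)) := dotProduct_smul A xp _
    _ < A := mul_lt_of_lt_one_right hA ht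

theorem stmt11 (n k : ℕ) (hk : 0 < k)
    (XA : Matrix (Fin n) (Fin k) ℝ) (xp : Fin n → ℝ)
    (hli : LinearIndependent ℝ XA.transpose)
    (hunit : xp ⬝ᵥ xp = 1)
    (hspan : xp ∉ Submodule.span ℝ (Set.range XA.transpose)) :
    let G : Matrix (Fin k) (Fin k) ℝ := XA.transpose * XA
    let A : ℝ := (Real.sqrt ((1 : Fin k → ℝ) ⬝ᵥ (G⁻¹ *ᵥ (1 : Fin k → ℝ))))⁻¹
    let u : Fin n → ℝ := A • (XA *ᵥ (G⁻¹ *ᵥ (1 : Fin k → ℝ)))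
    let XAp : Matrix (Fin n) (Fin k ⊕ Unit) ℝ :=
      Matrix.of fun i j => Sum.elim (fun l => XA i l) (fun _ => xp i) j
    let Gp : Matrix (Fin k ⊕ Unit) (Fin k ⊕ Unit) ℝ := XAp.transpose * XAp
    (∀ j, 0 < (Gp⁻¹ *ᵥ (1 : Fin k ⊕ Unit → ℝ)) j) →
      xp ⬝ᵥ u < A :=
  stmt11_general n k hk XA xp hli hspan
end

section
/- Fix a sign pattern $S_{\mathcal{A}} = \mathrm{diag}(s_j)$, $s_j \in \{\pm 1\}$, and a set $\mathcal{A}$ of size $k$ with $X_{\mathcal{A}}$ having linearly independent columns. For $t_1 < t_2$, suppose $\beta(t_i)$ minimizes $\|y - X_{\mathcal{A}}S_{\mathcal{A}}\beta\|^2$ subject to $\mathbf{1}'\beta = t_i$. Then $\beta(t_2) - \beta(t_1) = A_{\mathcal{A}}^2 (t_2 - t_1)\, \mathcal{G}_{\mathcal{A}}^{-1}\mathbf{1}$, where $\mathcal{G}_{\mathcal{A}} = (X_{\mathcal{A}}S_{\mathcal{A}})'(X_{\mathcal{A}}S_{\mathcal{A}})$ and $A_{\mathcal{A}} = (\mathbf{1}'\mathcal{G}_{\mathcal{A}}^{-1}\mathbf{1})^{-1/2}$.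 Consequently the fitted values satisfy $X_{\mathcal{A}}S_{\mathcal{A}}\beta(t_2) - X_{\mathcal{A}}S_{\mathcal{A}}\beta(t_1) = A_{\mathcal{A}}(t_2 - t_1)u_{\mathcal{A}}$ with $u_{\mathcal{A}}$ the equiangular unit vector. -/
open Matrix

lemma quad_aux' {a b : ℝ} (ha : 0 ≤ a) (h : ∀ ε : ℝ, 0 ≤ a * ε ^ 2 + b * ε) : b = 0 := by
  set c : ℝ := (a + 1)⁻¹ with hcdef
  have hpos : (0:ℝ) < a + 1 := by linarith
  have hcpos : 0 < c := inv_pos.mpr hpos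
  have hc : c * (a + 1) = 1 := inv_mul_cancel₀ (ne_of_gt hpos)
  have h1 := h (-(b * c))
  have h2 : 0 ≤ a * (b * c) ^ 2 - b ^ 2 * c := by nlinarith [h1]
  have h3 : a * (b * c) ^ 2 - b ^ 2 * c = -((b * c) ^ 2) := by
    linear_combination (b ^ 2 * c) * hc
  rw [h3] at h2
  have hbc : b * c = 0 := by nlinarith [sq_nonneg (b * c)]
  rcases mul_eq_zero.mp hbc with h | h
  · exact h
  · exact absurd h (ne_of_gt hcpos)

lemma dot_self_nonneg' {m : ℕ} (v : Fin m → ℝ) : 0 ≤ v ⬝ᵥ v :=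
  Finset.sum_nonneg fun _ _ => mul_self_nonneg _

lemma foc' {n k : ℕ} (W : Matrix (Fin n) (Fin k) ℝ) (y : Fin n → ℝ) (β : Fin k → ℝ) (t : ℝ)
    (hsum : ∑ j, β j = t)
    (hmin : ∀ b, ∑ j, b j = t →
      (y - W *ᵥ β) ⬝ᵥ (y - W *ᵥ β) ≤ (y - W *ᵥ b) ⬝ᵥ (y - W *ᵥ b))
    (v : Fin k → ℝ) (hv : ∑ j, v j = 0) :
    (Wᵀ *ᵥ (y - W *ᵥ β)) ⬝ᵥ v = 0 := by
  set r := y - W *ᵥ β with hr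
  set w := W *ᵥ v with hw
  have key : ∀ ε : ℝ, 0 ≤ (w ⬝ᵥ w) * ε ^ 2 + (-2 * (r ⬝ᵥ w)) * ε := by
    intro ε
    have hb : ∑ j, (β + ε • v) j = t := by
      simp [Finset.sum_add_distrib, hsum, ← Finset.mul_sum, hv]
    have h1 := hmin (β + ε • v) hb
    have hexp : y - W *ᵥ (β + ε • v) = r - ε • w := by
      rw [mulVec_add, mulVec_smul, hr, hw]; abel
    rw [hexp] at h1
    have h2 : (r - ε • w) ⬝ᵥ (r - ε • w)
        = r ⬝ᵥ r + ((w ⬝ᵥ w) * ε ^ 2 + (-2 * (r ⬝ᵥ w)) * ε) := by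
      simp [sub_dotProduct, dotProduct_sub, smul_dotProduct, dotProduct_smul,
        dotProduct_comm w r, smul_eq_mul]
      ring
    rw [h2] at h1
    linarith
  have hb0 : (-2 : ℝ) * (r ⬝ᵥ w) = 0 := quad_aux' (dot_self_nonneg' w) key
  have hrw : r ⬝ᵥ w = 0 := by linarith
  rw [hw] at hrw
  rw [mulVec_transpose, ← dotProduct_mulVec]
  exact hrw

theorem stmt14 (n k : ℕ) (hk : 0 < k)
    (XA : Matrix (Fin n) (Fin k) ℝ) (hli : LinearIndependent ℝ XA.transpose)
    (s : Fin k → ℝ) (hs : ∀ j, s j = 1 ∨ s j = -1)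
    (y : Fin n → ℝ) (t1 t2 : ℝ) (ht : t1 < t2) (β1 β2 : Fin k → ℝ)
    (hsum1 : ∑ j, β1 j = t1) (hsum2 : ∑ j, β2 j = t2)
    (hmin1 : ∀ b : Fin k → ℝ, ∑ j, b j = t1 →
      (y - (XA * Matrix.diagonal s) *ᵥ β1) ⬝ᵥ (y - (XA * Matrix.diagonal s) *ᵥ β1) ≤
        (y - (XA * Matrix.diagonal s) *ᵥ b) ⬝ᵥ (y - (XA * Matrix.diagonal s) *ᵥ b))
    (hmin2 : ∀ b : Fin k → ℝ, ∑ j, b j = t2 →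
      (y - (XA * Matrix.diagonal s) *ᵥ β2) ⬝ᵥ (y - (XA * Matrix.diagonal s) *ᵥ β2) ≤
        (y - (XA * Matrix.diagonal s) *ᵥ b) ⬝ᵥ (y - (XA * Matrix.diagonal s) *ᵥ b)) :
    let W : Matrix (Fin n) (Fin k) ℝ := XA * Matrix.diagonal s
    let G : Matrix (Fin k) (Fin k) ℝ := W.transpose * W
    let A : ℝ := (Real.sqrt ((1 : Fin k → ℝ) ⬝ᵥ (G⁻¹ *ᵥ (1 : Fin k → ℝ))))⁻¹
    let u : Fin n → ℝ := A • (W *ᵥ (G⁻¹ *ᵥ (1 : Fin k → ℝ)))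
    β2 - β1 = (A ^ 2 * (t2 - t1)) • (G⁻¹ *ᵥ (1 : Fin k → ℝ)) ∧
      W *ᵥ β2 - W *ᵥ β1 = (A * (t2 - t1)) • u := by
  intro W G A u
  -- kernel of W is trivial
  have hker : ∀ v : Fin k → ℝ, W *ᵥ v = 0 → v = 0 := by
    intro v hv
    have hWv : W *ᵥ v = XA *ᵥ (Matrix.diagonal s *ᵥ v) := by
      rw [mulVec_mulVec]
    set w : Fin k → ℝ := Matrix.diagonal s *ᵥ v with hwdef
    have hXw : XA *ᵥ w = 0 := by rw [← hWv]; exact hv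
    have hsum : ∑ j, w j • XA.transpose j = 0 := by
      funext i
      have : (XA *ᵥ w) i = 0 := by rw [hXw]; rfl
      simpa [mulVec, dotProduct, Finset.sum_apply, transpose_apply, mul_comm] using this
    have hw0 := Fintype.linearIndependent_iff.mp hli w hsum
    funext j
    have hwj : w j = 0 := hw0 j
    rw [hwdef, mulVec_diagonal] at hwj
    have hsj : s j ≠ 0 := by rcases hs j with h | h <;> rw [h] <;> norm_num
    exact (mul_eq_zero.mp hwj).resolve_left hsj
  -- G preliminaries
  have hGv : ∀ v : Fin k → ℝ, G *ᵥ v = Wᵀ *ᵥ (W *ᵥ v) := by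
    intro v; rw [mulVec_mulVec]
  have hdotG : ∀ v z : Fin k → ℝ, v ⬝ᵥ (G *ᵥ z) = (W *ᵥ v) ⬝ᵥ (W *ᵥ z) := by
    intro v z
    rw [hGv, mulVec_transpose, dotProduct_comm, ← dotProduct_mulVec, dotProduct_comm]
  have hGker : ∀ v : Fin k → ℝ, G *ᵥ v = 0 → v = 0 := by
    intro v hv
    have h1 : v ⬝ᵥ (G *ᵥ v) = 0 := by rw [hv]; simp
    rw [hdotG] at h1
    exact hker v (dotProduct_self_eq_zero.mp h1)
  have hGunit : IsUnit G := by
    rw [← Matrix.mulVec_injective_iff_isUnit]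
    intro x z hxz
    have : G *ᵥ (x - z) = 0 := by rw [mulVec_sub, hxz, sub_self]
    have := hGker _ this
    exact sub_eq_zero.mp this
  have hdet : IsUnit G.det := (isUnit_iff_isUnit_det G).mp hGunit
  have hinvG : ∀ x : Fin k → ℝ, G⁻¹ *ᵥ (G *ᵥ x) = x := by
    intro x
    rw [mulVec_mulVec, nonsing_inv_mul G hdet, one_mulVec]
  set z : Fin k → ℝ := G⁻¹ *ᵥ (1 : Fin k → ℝ) with hzdef
  have hGz : G *ᵥ z = 1 := by
    rw [hzdef, mulVec_mulVec, mul_nonsing_inv G hdet, one_mulVec]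
  set q : ℝ := (1 : Fin k → ℝ) ⬝ᵥ z with hqdef
  have hq : q = (W *ᵥ z) ⬝ᵥ (W *ᵥ z) := by
    rw [hqdef, ← hGz, dotProduct_comm, hdotG]
  have j0 : Fin k := ⟨0, hk⟩
  have hqpos : 0 < q := by
    rcases lt_or_eq_of_le (dot_self_nonneg' (W *ᵥ z)) with h | h
    · rw [hq]; exact h
    · exfalso
      have hz0 : z = 0 := hker z (dotProduct_self_eq_zero.mp h.symm)
      have := hGz
      rw [hz0, mulVec_zero] at this
      have h1 : (1 : Fin k → ℝ) j0 = 0 := by rw [← this]; rfl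
      norm_num at h1
  -- first-order conditions
  set c1 : Fin k → ℝ := Wᵀ *ᵥ (y - W *ᵥ β1) with hc1
  set c2 : Fin k → ℝ := Wᵀ *ᵥ (y - W *ᵥ β2) with hc2
  have hfoc1 := foc' W y β1 t1 hsum1 hmin1
  have hfoc2 := foc' W y β2 t2 hsum2 hmin2
  have hconst : ∀ (c : Fin k → ℝ), (∀ v, ∑ j, v j = 0 → c ⬝ᵥ v = 0) →
      ∀ j, c j = c j0 := by
    intro c hc j
    set v : Fin k → ℝ := fun i => (if i = j then (1:ℝ) else 0) - (if i = j0 then 1 else 0) with hvdef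
    have hv : ∑ i, v i = 0 := by
      simp [hvdef, Finset.sum_sub_distrib, Finset.sum_ite_eq']
    have hcv := hc v hv
    have : c ⬝ᵥ v = c j - c j0 := by
      simp [hvdef, dotProduct, mul_sub, Finset.sum_sub_distrib, mul_ite, mul_one, mul_zero,
        Finset.sum_ite_eq']
    rw [this] at hcv
    linarith
  have hc1const := hconst c1 (fun v hv => hfoc1 v hv)
  have hc2const := hconst c2 (fun v hv => hfoc2 v hv)
  set lam1 : ℝ := c1 j0 with hlam1
  set lam2 : ℝ := c2 j0 with hlam2
  -- G (β2 - β1) = (lam1 - lam2) • 1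
  have hGdiff : G *ᵥ (β2 - β1) = (lam1 - lam2) • (1 : Fin k → ℝ) := by
    have h1 : c1 = Wᵀ *ᵥ y - G *ᵥ β1 := by rw [hc1, mulVec_sub, hGv]
    have h2 : c2 = Wᵀ *ᵥ y - G *ᵥ β2 := by rw [hc2, mulVec_sub, hGv]
    have h3 : G *ᵥ (β2 - β1) = c1 - c2 := by
      rw [mulVec_sub, h1, h2]; abel
    rw [h3]
    funext j
    have := hc1const j
    have := hc2const j
    simp only [Pi.sub_apply, Pi.smul_apply, Pi.one_apply, smul_eq_mul, mul_one]
    rw [hc1const j, hc2const j]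
  have hdiff : β2 - β1 = (lam1 - lam2) • z := by
    have := congrArg (fun x => G⁻¹ *ᵥ x) hGdiff
    simpa [hinvG, mulVec_smul, hzdef] using this
  -- sum identity
  have hsumz : ∑ j, z j = q := by
    rw [hqdef]; simp [dotProduct]
  have hsumdiff : t2 - t1 = (lam1 - lam2) * q := by
    have h1 : ∑ j, (β2 - β1) j = t2 - t1 := by
      simp [Finset.sum_sub_distrib, hsum1, hsum2]
    have h2 : ∑ j, ((lam1 - lam2) • z) j = (lam1 - lam2) * q := by
      simp [← Finset.mul_sum, hsumz]
    rw [← h1, ← h2, hdiff]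
  have hA2 : A ^ 2 = q⁻¹ := by
    show ((Real.sqrt q)⁻¹) ^ 2 = q⁻¹
    rw [inv_pow, Real.sq_sqrt hqpos.le]
  have hlamval : lam1 - lam2 = A ^ 2 * (t2 - t1) := by
    rw [hA2]
    field_simp
    linarith [hsumdiff]
  have goal1 : β2 - β1 = (A ^ 2 * (t2 - t1)) • z := by
    rw [hdiff, hlamval]
  refine ⟨goal1, ?_⟩
  have : W *ᵥ β2 - W *ᵥ β1 = W *ᵥ (β2 - β1) := by rw [mulVec_sub]
  rw [this, goal1, mulVec_smul]
  show (A ^ 2 * (t2 - t1)) • (W *ᵥ z) = (A * (t2 - t1)) • (A • (W *ᵥ z))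
  rw [smul_smul]
  ring_nf
end

section
/- Let $u_{\mathcal{A}}$ be the equiangular vector of $X_{\mathcal{A}}$ ($n \times k$, linearly independent unit columns) and let $\mathcal{B} \subseteq \mathcal{A}$ be a nonempty subset. Then the orthogonal projection of $u_{\mathcal{A}}$ onto $\mathrm{span}(X_{\mathcal{B}})$ equals $(A_{\mathcal{A}}/A_{\mathcal{B}})\, u_{\mathcal{B}}$, where $u_{\mathcal{B}}$ and $A_{\mathcal{B}}$ are the equiangular vector and constant of the submatrix $X_{\mathcal{B}}$. -/
open Matrix

/-! Every column of `X_B` is a column of `X_A`, so `X_Bᵀ u_A = A_A 𝟙`. Hence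
`X_B G_B⁻¹ X_Bᵀ u_A = A_A X_B G_B⁻¹ 𝟙 = (A_A / A_B) u_B`, where `A_B ≠ 0` because `G_B⁻¹` is
positive definite and `𝟙 ≠ 0`. -/

section Equiangular

variable {m p : Type*} [Fintype m] [Fintype p]

theorem posDef_transpose_mul_self_of_linearIndependent {X : Matrix m p ℝ}
    (hX : LinearIndependent ℝ Xᵀ) : (Xᵀ * X).PosDef := by
  simpa only [conjTranspose_eq_transpose_of_trivial] using
    PosDef.conjTranspose_mul_self X (mulVec_injective_iff.mpr hX)

variable [DecidableEq p]

noncomputable def equiangularConst (X : Matrix m p ℝ) : ℝ :=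
  (√((1 : p → ℝ) ⬝ᵥ ((Xᵀ * X)⁻¹ *ᵥ 1)))⁻¹

noncomputable def equiangularVector (X : Matrix m p ℝ) : m → ℝ :=
  equiangularConst X • (X *ᵥ ((Xᵀ * X)⁻¹ *ᵥ 1))

theorem equiangularConst_pos [Nonempty p] {X : Matrix m p ℝ} (hX : (Xᵀ * X).PosDef) :
    0 < equiangularConst X := by
  have h := hX.inv.dotProduct_mulVec_pos (one_ne_zero : (1 : p → ℝ) ≠ 0)
  rw [star_trivial] at h
  exact inv_pos.mpr (Real.sqrt_pos.mpr h)

theorem transpose_mulVec_equiangularVector {X : Matrix m p ℝ} (hX : IsUnit (Xᵀ * X)) :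
    Xᵀ *ᵥ equiangularVector X = equiangularConst X • 1 := by
  rw [equiangularVector, mulVec_smul, mulVec_mulVec, mulVec_mulVec,
    mul_nonsing_inv _ ((isUnit_iff_isUnit_det _).mp hX), one_mulVec]

theorem mulVec_eq_smul_equiangularVector {X : Matrix m p ℝ} (hX : equiangularConst X ≠ 0)
    {v : m → ℝ} {c : ℝ} (hv : Xᵀ *ᵥ v = c • 1) :
    (X * (Xᵀ * X)⁻¹ * Xᵀ) *ᵥ v = (c / equiangularConst X) • equiangularVector X := by
  rw [← mulVec_mulVec, hv, ← mulVec_mulVec, mulVec_smul, mulVec_smul, equiangularVector, smul_smul,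
    div_mul_cancel₀ _ hX]

end Equiangular

theorem stmt15_general (n k : ℕ)
    (XA : Matrix (Fin n) (Fin k) ℝ) (hli : LinearIndependent ℝ XA.transpose)
    (s : Finset (Fin k)) (hs : s.Nonempty) :
    let GA : Matrix (Fin k) (Fin k) ℝ := XA.transpose * XA
    let AA : ℝ := (Real.sqrt ((1 : Fin k → ℝ) ⬝ᵥ (GA⁻¹ *ᵥ (1 : Fin k → ℝ))))⁻¹
    let uA : Fin n → ℝ := AA • (XA *ᵥ (GA⁻¹ *ᵥ (1 : Fin k → ℝ)))
    let XB : Matrix (Fin n) {j // j ∈ s} ℝ := Matrix.of fun i j => XA i j.1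
    let GB : Matrix {j // j ∈ s} {j // j ∈ s} ℝ := XB.transpose * XB
    let AB : ℝ :=
      (Real.sqrt ((1 : {j // j ∈ s} → ℝ) ⬝ᵥ (GB⁻¹ *ᵥ (1 : {j // j ∈ s} → ℝ))))⁻¹
    let uB : Fin n → ℝ := AB • (XB *ᵥ (GB⁻¹ *ᵥ (1 : {j // j ∈ s} → ℝ)))
    (XB * GB⁻¹ * XB.transpose) *ᵥ uA = (AA / AB) • uB := by
  intro GA AA uA XB GB AB uB
  have : Nonempty s := hs.to_subtype
  have hXB : XB = XA.submatrix id Subtype.val := rfl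
  have hGA : GA.PosDef := posDef_transpose_mul_self_of_linearIndependent hli
  -- `GB` is the principal submatrix of `GA` on `s`.
  have hGB : GB.PosDef := by
    simpa only [hXB, GB, transpose_submatrix, ← submatrix_mul _ _ _ _ _ Function.bijective_id]
      using hGA.submatrix Subtype.val_injective
  have hcorr : XBᵀ *ᵥ uA = AA • 1 := by
    change (XAᵀ *ᵥ equiangularVector XA) ∘ Subtype.val = _
    rw [transpose_mulVec_equiangularVector hGA.isUnit]
    rfl
  exact mulVec_eq_smul_equiangularVector (equiangularConst_pos hGB).ne' hcorr

theorem stmt15 (n k : ℕ) (hk : 0 < k)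
    (XA : Matrix (Fin n) (Fin k) ℝ) (hli : LinearIndependent ℝ XA.transpose)
    (hunit : ∀ j, (fun i => XA i j) ⬝ᵥ (fun i => XA i j) = 1)
    (s : Finset (Fin k)) (hs : s.Nonempty) :
    let GA : Matrix (Fin k) (Fin k) ℝ := XA.transpose * XA
    let AA : ℝ := (Real.sqrt ((1 : Fin k → ℝ) ⬝ᵥ (GA⁻¹ *ᵥ (1 : Fin k → ℝ))))⁻¹
    let uA : Fin n → ℝ := AA • (XA *ᵥ (GA⁻¹ *ᵥ (1 : Fin k → ℝ)))
    let XB : Matrix (Fin n) {j // j ∈ s} ℝ := Matrix.of fun i j => XA i j.1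
    let GB : Matrix {j // j ∈ s} {j // j ∈ s} ℝ := XB.transpose * XB
    let AB : ℝ :=
      (Real.sqrt ((1 : {j // j ∈ s} → ℝ) ⬝ᵥ (GB⁻¹ *ᵥ (1 : {j // j ∈ s} → ℝ))))⁻¹
    let uB : Fin n → ℝ := AB • (XB *ᵥ (GB⁻¹ *ᵥ (1 : {j // j ∈ s} → ℝ)))
    (XB * GB⁻¹ * XB.transpose) *ᵥ uA = (AA / AB) • uB :=
  stmt15_general n k XA hli s hs
end

section
/- With $X$ an $n \times m$ matrix whose columns have unit norm, let $\hat{\mu} \in \mathbb{R}^n$, $\hat{c} = X'(y - \hat{\mu})$, $\hat{C} = \max_j |\hat{c}_j|$. For $\hat{\mu}(N) $ obtained from $\hat{\mu}$ by $N$ forward-stagewise steps of size $\varepsilon$ (each step adds $\pm\varepsilon x_j$ for some $j$ maximizing the absolute current correlation), if $N\varepsilon < \tfrac{1}{2}(\hat{C} - \max_{j \notin \mathcal{A}} |\hat{c}_j|)$, where $\mathcal{A} = \{j : |\hat{c}_j| = \hat{C}\}$, then no index outside $\mathcal{A}$ is ever selected in any of the $N$ steps. -/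
open Matrix

theorem stmt18 (n m : ℕ) (X : Matrix (Fin n) (Fin m) ℝ)
    (hunit : ∀ j, (fun i => X i j) ⬝ᵥ (fun i => X i j) = 1)
    (y muhat : Fin n → ℝ) (ε : ℝ) (hε : 0 < ε) (N : ℕ)
    (μseq : ℕ → Fin n → ℝ) (sel : ℕ → Fin m) (sgn : ℕ → ℝ)
    (h0 : μseq 0 = muhat)
    (hsgn : ∀ t, sgn t = 1 ∨ sgn t = -1)
    (hmax : ∀ t < N, ∀ j,
      |(fun i => X i j) ⬝ᵥ (y - μseq t)| ≤ |(fun i => X i (sel t)) ⬝ᵥ (y - μseq t)|)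
    (hstep : ∀ t < N, μseq (t + 1) = μseq t + (sgn t * ε) • fun i => X i (sel t))
    (hgap : ∀ j, |(fun i => X i j) ⬝ᵥ (y - muhat)| ≠
        (⨆ j', |(fun i => X i j') ⬝ᵥ (y - muhat)|) →
      N * ε < ((⨆ j', |(fun i => X i j') ⬝ᵥ (y - muhat)|) -
        |(fun i => X i j) ⬝ᵥ (y - muhat)|) / 2) :
    ∀ t < N, |(fun i => X i (sel t)) ⬝ᵥ (y - muhat)| =
      ⨆ j', |(fun i => X i j') ⬝ᵥ (y - muhat)| := by
  have hm : Nonempty (Fin m) := ⟨sel 0⟩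
  set f : Fin m → ℝ := fun j => |(fun i => X i j) ⬝ᵥ (y - muhat)| with hf
  set C : ℝ := ⨆ j', f j' with hC
  -- Cauchy–Schwarz: |x_j ⬝ x_k| ≤ 1
  have hCS : ∀ j k : Fin m, |(fun i => X i j) ⬝ᵥ (fun i => X i k)| ≤ 1 := by
    intro j k
    have hj := hunit j
    have hk := hunit k
    simp only [dotProduct] at hj hk ⊢
    have h1 : (∑ i, X i j * X i k)^2 ≤ 1 := by
      have := Finset.sum_mul_sq_le_sq_mul_sq Finset.univ (fun i => X i j) (fun i => X i k)
      calc (∑ i, X i j * X i k)^2 ≤ (∑ i, X i j ^ 2) * (∑ i, X i k ^ 2) := this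
        _ = 1 := by
            rw [show (∑ i, X i j ^ 2) = 1 by rw [← hj]; congr 1; ext i; ring,
                show (∑ i, X i k ^ 2) = 1 by rw [← hk]; congr 1; ext i; ring]; ring
    nlinarith [sq_abs (∑ i, X i j * X i k), abs_nonneg (∑ i, X i j * X i k)]
  -- drift bound
  have hdrift : ∀ t ≤ N, ∀ j,
      |(fun i => X i j) ⬝ᵥ (y - μseq t) - (fun i => X i j) ⬝ᵥ (y - muhat)| ≤ t * ε := by
    intro t
    induction t with
    | zero => intro _ j; simp [h0]
    | succ t ih =>
      intro ht j
      have htN : t < N := lt_of_lt_of_le (Nat.lt_succ_self t) ht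
      have ih' := ih (le_of_lt htN) j
      have hstep' := hstep t htN
      have key : (fun i => X i j) ⬝ᵥ (y - μseq (t+1)) =
          (fun i => X i j) ⬝ᵥ (y - μseq t)
            - (sgn t * ε) * ((fun i => X i j) ⬝ᵥ (fun i => X i (sel t))) := by
        rw [hstep']
        simp only [dotProduct, Pi.sub_apply, Pi.add_apply, Pi.smul_apply, smul_eq_mul,
          Finset.mul_sum, ← Finset.sum_sub_distrib]
        congr 1; ext i; ring
      rw [key]
      have hs : |sgn t| = 1 := by rcases hsgn t with h | h <;> simp [h]
      have hb : |(sgn t * ε) * ((fun i => X i j) ⬝ᵥ (fun i => X i (sel t)))| ≤ ε := by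
        rw [abs_mul, abs_mul, hs, one_mul, abs_of_pos hε]
        calc ε * |(fun i => X i j) ⬝ᵥ (fun i => X i (sel t))| ≤ ε * 1 :=
              mul_le_mul_of_nonneg_left (hCS j (sel t)) (le_of_lt hε)
          _ = ε := mul_one ε
      have : |(fun i => X i j) ⬝ᵥ (y - μseq t)
          - (sgn t * ε) * ((fun i => X i j) ⬝ᵥ (fun i => X i (sel t)))
          - (fun i => X i j) ⬝ᵥ (y - muhat)| ≤
          |(fun i => X i j) ⬝ᵥ (y - μseq t) - (fun i => X i j) ⬝ᵥ (y - muhat)|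
          + |(sgn t * ε) * ((fun i => X i j) ⬝ᵥ (fun i => X i (sel t)))| := by
        have := abs_sub ((fun i => X i j) ⬝ᵥ (y - μseq t) - (fun i => X i j) ⬝ᵥ (y - muhat))
          ((sgn t * ε) * ((fun i => X i j) ⬝ᵥ (fun i => X i (sel t))))
        calc _ = |((fun i => X i j) ⬝ᵥ (y - μseq t) - (fun i => X i j) ⬝ᵥ (y - muhat))
              - (sgn t * ε) * ((fun i => X i j) ⬝ᵥ (fun i => X i (sel t)))| := by ring_nf
          _ ≤ _ := abs_sub _ _
      calc _ ≤ _ := this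
        _ ≤ t * ε + ε := add_le_add ih' hb
        _ = (t + 1 : ℕ) * ε := by push_cast; ring
  -- sup attained
  have hfin : (Set.range f).Finite := Set.finite_range f
  have hbdd : BddAbove (Set.range f) := hfin.bddAbove
  have hle : ∀ j, f j ≤ C := fun j => le_ciSup hbdd j
  obtain ⟨j0, hj0⟩ := Finite.exists_max f
  have hj0C : f j0 = C := le_antisymm (hle j0) (ciSup_le hj0)
  intro t ht
  by_contra hne
  have hgap' := hgap (sel t) hne
  have h1 := hdrift t (le_of_lt ht) (sel t)
  have h2 := hdrift t (le_of_lt ht) j0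
  have h3 := hmax t ht j0
  have htε : (t:ℝ) * ε < N * ε := by
    apply mul_lt_mul_of_pos_right _ hε
    exact_mod_cast ht
  -- |c_sel(t)| ≥ |c_{j0}(t)| ≥ C - tε ; |c_sel(t)| ≤ f(sel t) + tε
  have hA : |(fun i => X i j0) ⬝ᵥ (y - μseq t)| ≥ C - t * ε := by
    have := abs_sub_abs_le_abs_sub ((fun i => X i j0) ⬝ᵥ (y - muhat))
      ((fun i => X i j0) ⬝ᵥ (y - muhat) - (fun i => X i j0) ⬝ᵥ (y - μseq t))
    have h2' : |(fun i => X i j0) ⬝ᵥ (y - muhat) - (fun i => X i j0) ⬝ᵥ (y - μseq t)|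
        ≤ t * ε := by rw [abs_sub_comm]; exact h2
    have := abs_sub_abs_le_abs_sub ((fun i => X i j0) ⬝ᵥ (y - μseq t))
      ((fun i => X i j0) ⬝ᵥ (y - muhat))
    have hfj0 : |(fun i => X i j0) ⬝ᵥ (y - muhat)| = C := hj0C
    nlinarith [abs_sub_abs_le_abs_sub ((fun i => X i j0) ⬝ᵥ (y - muhat))
      ((fun i => X i j0) ⬝ᵥ (y - μseq t)), h2']
  have hB : |(fun i => X i (sel t)) ⬝ᵥ (y - μseq t)| ≤ f (sel t) + t * ε := by
    have := abs_sub_abs_le_abs_sub ((fun i => X i (sel t)) ⬝ᵥ (y - μseq t))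
      ((fun i => X i (sel t)) ⬝ᵥ (y - muhat))
    simp only [hf]
    nlinarith
  have hCf : f (sel t) < C - 2 * (N * ε) := by
    simp only [hf, hC] at hgap' ⊢
    linarith
  linarith
end
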